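/- For natural numbers m ≥ 1 and N ≥ 1, define a(r) = ⌊(m − r)/N⌋ and b(r) = (m − r) mod N for integers 0 ≤ r ≤ m, and set d_m^N(r) = (m − r)(m + 1 − r)/2 + a(r)·((a(r) − 1)·N + 2·b(r))/2. Then d_m^N is nonincreasing in r, d_m^N(m) = 0, and d_m^N(0) ≥ m(m+1)/2. -/
import Mathlib

noncomputable def Fd (N k : ℕ) : ℚ :=
  (k : ℚ) * ((k : ℚ) + 1) / 2
    + ((k / N : ℕ) : ℚ) * ((((k / N : ℕ) : ℚ) - 1) * N + 2 * ((k % N : ℕ) : ℚ)) / 2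

lemma Fd_step (N : ℕ) (hN : 1 ≤ N) (k : ℕ) : Fd N k ≤ Fd N (k + 1) := by
  have hk : N * (k / N) + k % N = k := Nat.div_add_mod k N
  have hb : k % N < N := Nat.mod_lt _ hN
  set q := k / N with hq
  set b := k % N with hbdef
  by_cases h : b + 1 = N
  · have hk1 : k + 1 = N * (q + 1) := by rw [Nat.mul_add, Nat.mul_one]; omega
    have hdiv : (k + 1) / N = q + 1 := by
      rw [hk1, Nat.mul_div_cancel_left _ (by omega : 0 < N)]
    have hmod : (k + 1) % N = 0 := by
      rw [hk1]; exact Nat.mul_mod_right _ _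
    unfold Fd
    rw [hdiv, hmod]
    have hkQ : (k : ℚ) = N * q + b := by
      exact_mod_cast congrArg (Nat.cast : ℕ → ℚ) hk.symm
    have hbQ : (b : ℚ) + 1 = N := by exact_mod_cast h
    push_cast
    nlinarith [Nat.cast_nonneg (α := ℚ) q, Nat.cast_nonneg (α := ℚ) b,
      Nat.cast_nonneg (α := ℚ) N]
  · have hk1 : k + 1 = N * q + (b + 1) := by omega
    have hb1 : b + 1 < N := by omega
    have hdiv : (k + 1) / N = q := by
      rw [hk1, Nat.mul_add_div (by omega : 0 < N), Nat.div_eq_of_lt hb1, Nat.add_zero]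
    have hmod : (k + 1) % N = b + 1 := by
      rw [hk1, Nat.mul_add_mod, Nat.mod_eq_of_lt hb1]
    unfold Fd
    rw [hdiv, hmod]
    have hkQ : (k : ℚ) = N * q + b := by
      exact_mod_cast congrArg (Nat.cast : ℕ → ℚ) hk.symm
    push_cast
    nlinarith [Nat.cast_nonneg (α := ℚ) q, Nat.cast_nonneg (α := ℚ) b,
      Nat.cast_nonneg (α := ℚ) N]

lemma Fd_mono (N : ℕ) (hN : 1 ≤ N) : Monotone (Fd N) := by
  apply monotone_nat_of_le_succ
  intro n; exact Fd_step N hN n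

theorem stmt_8 (m N : ℕ) (hm : 1 ≤ m) (hN : 1 ≤ N)
    (a b : ℕ → ℕ) (ha : ∀ r, a r = (m - r) / N) (hb : ∀ r, b r = (m - r) % N)
    (d : ℕ → ℚ)
    (hd : ∀ r, d r = ((m : ℚ) - r) * ((m : ℚ) + 1 - r) / 2
        + (a r : ℚ) * (((a r : ℚ) - 1) * N + 2 * (b r : ℚ)) / 2) :
    (∀ r s : ℕ, r ≤ s → s ≤ m → d s ≤ d r) ∧ d m = 0 ∧ (m : ℚ) * (m + 1) / 2 ≤ d 0 := by
  have key : ∀ r, r ≤ m → d r = Fd N (m - r) := by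
    intro r hr
    rw [hd r, ha r, hb r]
    unfold Fd
    have hcast : ((m - r : ℕ) : ℚ) = (m : ℚ) - r := by
      push_cast [Nat.cast_sub hr]; ring
    rw [hcast]
    ring
  refine ⟨?_, ?_, ?_⟩
  · intro r s hrs hsm
    rw [key r (le_trans hrs hsm), key s hsm]
    exact Fd_mono N hN (by omega)
  · rw [key m le_rfl]
    simp [Fd]
  · rw [key 0 (by omega)]
    simp only [Nat.sub_zero]
    unfold Fd
    have h2 : 0 ≤ ((m / N : ℕ) : ℚ) * ((((m / N : ℕ) : ℚ) - 1) * N + 2 * ((m % N : ℕ) : ℚ)) / 2 := by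
      rcases Nat.eq_zero_or_pos (m / N) with h | h
      · simp [h]
      · have h1 : (1 : ℚ) ≤ ((m / N : ℕ) : ℚ) := by exact_mod_cast h
        have h3 : (0:ℚ) ≤ ((m % N : ℕ) : ℚ) := Nat.cast_nonneg _
        have h4 : (0:ℚ) ≤ (N : ℚ) := Nat.cast_nonneg _
        have h5 : (0:ℚ) ≤ (((m / N : ℕ) : ℚ) - 1) * N + 2 * ((m % N : ℕ) : ℚ) := by
          have := mul_nonneg (by linarith : (0:ℚ) ≤ ((m / N : ℕ) : ℚ) - 1) h4
          linarith
        have h6 : (0:ℚ) ≤ ((m / N : ℕ) : ℚ) := by linarith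
        positivity
    linarith
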